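/- For every finite set P, every finite set Q of quartets over P, and every integer k ≥ 5, the complement of the graph G(P,Q) contains no induced cycle on k vertices. -/

import Mathlib

open SimpleGraph

/-- An induced matching of `G`: a set of edges of `G` that pairwise share no endpoint and
such that no edge of `G` joins an endpoint of one edge of the set to an endpoint of a
different edge of the set. -/
def IsInducedMatching {V : Type} (G : SimpleGraph V) (M : Set (Sym2 V)) : Prop :=
  M ⊆ G.edgeSet ∧
    ∀ e ∈ M, ∀ f ∈ M, e ≠ f → ∀ x ∈ e, ∀ y ∈ f, x ≠ y ∧ ¬ G.Adj x y

/-- The bipartite graph `G[A, Aᶜ]` consisting of the edges of `G` crossing the cut `(A, Aᶜ)`. -/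
def cutGraph {V : Type} (G : SimpleGraph V) (A : Set V) : SimpleGraph V where
  Adj x y := G.Adj x y ∧ ((x ∈ A ∧ y ∉ A) ∨ (x ∉ A ∧ y ∈ A))
  symm := by
    refine ⟨?_⟩
    rintro x y ⟨h, h'⟩
    exact ⟨h.symm, by tauto⟩
  loopless := by
    refine ⟨?_⟩
    rintro x ⟨h, -⟩
    exact G.irrefl h

/-- The graph `G − E[Xᶜ]`, obtained from `G` by deleting all edges with both endpoints
outside of `X`. -/
def delOutside {V : Type} (G : SimpleGraph V) (X : Set V) : SimpleGraph V where
  Adj x y := G.Adj x y ∧ (x ∈ X ∨ y ∈ X)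
  symm := by
    refine ⟨?_⟩
    rintro x y ⟨h, h'⟩
    exact ⟨h.symm, h'.symm⟩
  loopless := by
    refine ⟨?_⟩
    rintro x ⟨h, -⟩
    exact G.irrefl h

/-- The mim-value of the cut `(A, Aᶜ)`: the maximum size of an induced matching of `G[A, Aᶜ]`. -/
noncomputable def mimValue {V : Type} (G : SimpleGraph V) (A : Set V) : ℕ :=
  sSup {n | ∃ M : Set (Sym2 V), IsInducedMatching (cutGraph G A) M ∧ M.ncard = n}

/-- The sim-value of the cut `(A, Aᶜ)`: the maximum size of a set of crossing edges of `G`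
that is an induced matching of `G`. -/
noncomputable def simValue {V : Type} (G : SimpleGraph V) (A : Set V) : ℕ :=
  sSup {n | ∃ M : Set (Sym2 V), M ⊆ (cutGraph G A).edgeSet ∧
    IsInducedMatching G M ∧ M.ncard = n}

/-- The upper-induced matching number of `X`: the maximum size of a set of crossing edges of
`G` that is an induced matching of `G − E[Xᶜ]`. -/
noncomputable def upperIMN {V : Type} (G : SimpleGraph V) (X : Set V) : ℕ :=
  sSup {n | ∃ M : Set (Sym2 V), M ⊆ (cutGraph G X).edgeSet ∧
    IsInducedMatching (delOutside G X) M ∧ M.ncard = n}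

/-- The omim-value of the cut `(A, Aᶜ)`. -/
noncomputable def omimValue {V : Type} (G : SimpleGraph V) (A : Set V) : ℕ :=
  min (upperIMN G A) (upperIMN G Aᶜ)

/-- The Omim-value of the cut `(A, Aᶜ)`. -/
noncomputable def bigOmimValue {V : Type} (G : SimpleGraph V) (A : Set V) : ℕ :=
  max (upperIMN G A) (upperIMN G Aᶜ)

/-- A branch decomposition over a vertex set `V`: a finite ternary tree (every vertex has
degree 1 or 3) together with a bijection from `V` to its set of leaves. -/
structure BranchDecomp (V : Type) : Type 1 where
  τ : Type
  tree : SimpleGraph τ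
  finite : Finite τ
  isTree : tree.IsTree
  ternary : ∀ t : τ, (tree.neighborSet t).ncard = 1 ∨ (tree.neighborSet t).ncard = 3
  toLeaf : V → τ
  leafBij : Set.BijOn toLeaf Set.univ {t | (tree.neighborSet t).ncard = 1}

/-- The side of the cut induced by the tree edge `xy` that contains the endpoint `x`:
the set of vertices of `V` whose leaf lies in the component of `T − xy` containing `x`. -/
def BranchDecomp.side {V : Type} (D : BranchDecomp V) (x y : D.τ) : Set V :=
  {v | (D.tree.deleteEdges {s(x, y)}).Reachable (D.toLeaf v) x}

/-- The width of a branch decomposition with respect to a cut-value function `val`: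
the maximum of `val` over all cuts induced by edges of the tree. -/
noncomputable def BranchDecomp.width {V : Type} (D : BranchDecomp V) (val : Set V → ℕ) : ℕ :=
  sSup {n | ∃ x y : D.τ, D.tree.Adj x y ∧ n = val (D.side x y)}

/-- A branch decomposition is a caterpillar if its internal (degree-3) vertices induce a path. -/
def BranchDecomp.IsCaterpillar {V : Type} (D : BranchDecomp V) : Prop :=
  ∃ n : ℕ, Nonempty
    ((D.tree.induce {t | (D.tree.neighborSet t).ncard = 3}) ≃g SimpleGraph.pathGraph n)

noncomputable def mimWidth {V : Type} (G : SimpleGraph V) : ℕ :=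
  sInf {n | ∃ D : BranchDecomp V, D.width (mimValue G) = n}

noncomputable def simWidth {V : Type} (G : SimpleGraph V) : ℕ :=
  sInf {n | ∃ D : BranchDecomp V, D.width (simValue G) = n}

noncomputable def omimWidth {V : Type} (G : SimpleGraph V) : ℕ :=
  sInf {n | ∃ D : BranchDecomp V, D.width (omimValue G) = n}

noncomputable def bigOmimWidth {V : Type} (G : SimpleGraph V) : ℕ :=
  sInf {n | ∃ D : BranchDecomp V, D.width (bigOmimValue G) = n}

noncomputable def linMimWidth {V : Type} (G : SimpleGraph V) : ℕ :=
  sInf {n | ∃ D : BranchDecomp V, D.IsCaterpillar ∧ D.width (mimValue G) = n}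

noncomputable def linSimWidth {V : Type} (G : SimpleGraph V) : ℕ :=
  sInf {n | ∃ D : BranchDecomp V, D.IsCaterpillar ∧ D.width (simValue G) = n}

noncomputable def linOmimWidth {V : Type} (G : SimpleGraph V) : ℕ :=
  sInf {n | ∃ D : BranchDecomp V, D.IsCaterpillar ∧ D.width (omimValue G) = n}

noncomputable def linBigOmimWidth {V : Type} (G : SimpleGraph V) : ℕ :=
  sInf {n | ∃ D : BranchDecomp V, D.IsCaterpillar ∧ D.width (bigOmimValue G) = n}

/-- A quartet `[ab|cd]` over `P`: four pairwise distinct elements of `P`, partitioned into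
the two unordered pairs `{a, b}` and `{c, d}`. -/
structure Quartet (P : Type) where
  a : P
  b : P
  c : P
  d : P
  hab : a ≠ b
  hac : a ≠ c
  had : a ≠ d
  hbc : b ≠ c
  hbd : b ≠ d
  hcd : c ≠ d

/-- The four elements of a quartet, indexed by `Fin 4`. -/
def Quartet.elem {P : Type} (q : Quartet P) : Fin 4 → P := ![q.a, q.b, q.c, q.d]

/-- Whether two indices in `Fin 4` correspond to the same side (pair) of a quartet. -/
def sameSide (i j : Fin 4) : Prop := (i.val < 2 ∧ j.val < 2) ∨ (2 ≤ i.val ∧ 2 ≤ j.val)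

/-- A ternary tree with leaves labeled by `P` satisfies the quartet `[ab|cd]` if some edge of
the tree separates the leaves labeled `a, b` from the leaves labeled `c, d`. -/
def BranchDecomp.Satisfies {P : Type} (D : BranchDecomp P) (q : Quartet P) : Prop :=
  ∃ x y : D.τ, D.tree.Adj x y ∧
    q.a ∈ D.side x y ∧ q.b ∈ D.side x y ∧ q.c ∉ D.side x y ∧ q.d ∉ D.side x y

/-- A linear order `le` on `P` satisfies the quartet `[ab|cd]` if both `a` and `b` are
smaller than both `c` and `d`, or both `c` and `d` are smaller than both `a` and `b`. -/
def OrdSatisfies {P : Type} (le : P → P → Prop) (q : Quartet P) : Prop :=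
  (le q.a q.c ∧ le q.a q.d ∧ le q.b q.c ∧ le q.b q.d) ∨
  (le q.c q.a ∧ le q.d q.a ∧ le q.c q.b ∧ le q.d q.b)

/-- The vertices of the graph `G(P, Q)`: the points of `P` together with the vertices
`u_x^q` for `q ∈ Q` and `x` one of the four elements of `q` (indexed by `Fin 4`). -/
inductive QVert (P : Type) (Q : Finset (Quartet P)) : Type
  | pt (p : P)
  | u (q : {q : Quartet P // q ∈ Q}) (i : Fin 4)

/-- Base relation generating the edges of `G(P, Q)`. -/
def qRel {P : Type} {Q : Finset (Quartet P)} : QVert P Q → QVert P Q → Prop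
  | QVert.pt p, QVert.u q i => p = q.1.elem i
  | QVert.u q i, QVert.u q' j => q = q' → sameSide i j
  | _, _ => False

/-- The graph `G(P, Q)` of the sim-width/omim-width/Omim-width reduction. -/
def quartetGraph (P : Type) (Q : Finset (Quartet P)) : SimpleGraph (QVert P Q) :=
  SimpleGraph.fromRel qRel

/-- The vertices of the graph `G'(P, Q)`: the points of `P`, the vertices `u_x^q`, and the
vertices `γ_x^q`. -/
inductive GpVert (P : Type) (Q : Finset (Quartet P)) : Type
  | pt (p : P)
  | u (q : {q : Quartet P // q ∈ Q}) (i : Fin 4)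
  | g (q : {q : Quartet P // q ∈ Q}) (i : Fin 4)

/-- Base relation generating the edges of `G'(P, Q)`. -/
def gpRel {P : Type} {Q : Finset (Quartet P)} : GpVert P Q → GpVert P Q → Prop
  | GpVert.pt p, GpVert.u q i => p = q.1.elem i
  | GpVert.pt p, GpVert.g q i => p = q.1.elem i
  | GpVert.u q i, GpVert.u q' j => q = q' → sameSide i j
  | GpVert.u q _, GpVert.g q' _ => q ≠ q'
  | GpVert.g q _, GpVert.u q' _ => q ≠ q'
  | GpVert.g _ _, GpVert.g _ _ => True
  | _, _ => False

/-- The graph `G'(P, Q)` of the mim-width reduction. -/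
def gpGraph (P : Type) (Q : Finset (Quartet P)) : SimpleGraph (GpVert P Q) :=
  SimpleGraph.fromRel gpRel

/-- Base relation generating the edges of `H(P, Q)`; the extra vertex `ω` is `none`,
adjacent exactly to the vertices of `U`. -/
def hRel {P : Type} {Q : Finset (Quartet P)} :
    Option (GpVert P Q) → Option (GpVert P Q) → Prop
  | some x, some y => gpRel x y
  | none, some (GpVert.u _ _) => True
  | _, _ => False

/-- The graph `H(P, Q)`, obtained from `G'(P, Q)` by adding a vertex `ω` adjacent to all of `U`. -/
def hGraph (P : Type) (Q : Finset (Quartet P)) : SimpleGraph (Option (GpVert P Q)) :=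
  SimpleGraph.fromRel hRel


instance : DecidableRel sameSide := fun i j => by unfold sameSide; infer_instance

lemma sameSide_refl (i : Fin 4) : sameSide i i := by revert i; decide
lemma sameSide_symm {i j : Fin 4} (h : sameSide i j) : sameSide j i := by revert h; revert i j; decide
lemma sameSide_trans {i j l : Fin 4} (h : sameSide i j) (h' : sameSide j l) : sameSide i l := by
  revert h h'; revert i j l; decide

lemma elem_inj {P : Type} (q : Quartet P) : Function.Injective q.elem := by
  have := q.hab; have := q.hac; have := q.had; have := q.hbc; have := q.hbd; have := q.hcd
  intro i j h
  fin_cases i <;> fin_cases j <;> simp_all [Quartet.elem]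

section cadj
variable {P : Type} {Q : Finset (Quartet P)}

lemma cadj_pt_pt {p p' : P} :
    (quartetGraph P Q)ᶜ.Adj (QVert.pt p) (QVert.pt p') ↔ p ≠ p' := by
  simp only [quartetGraph, compl_adj, fromRel_adj, qRel, ne_eq, QVert.pt.injEq]
  tauto

lemma cadj_pt_u {p : P} {q : {q : Quartet P // q ∈ Q}} {i : Fin 4} :
    (quartetGraph P Q)ᶜ.Adj (QVert.pt p) (QVert.u q i) ↔ p ≠ q.1.elem i := by
  have hne : QVert.pt p ≠ QVert.u q i := by simp
  simp only [quartetGraph, compl_adj, fromRel_adj, qRel, ne_eq, hne, or_false,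
    not_false_eq_true, true_and, true_iff]

lemma cadj_uu {q q' : {q : Quartet P // q ∈ Q}} {i j : Fin 4} :
    (quartetGraph P Q)ᶜ.Adj (QVert.u q i) (QVert.u q' j) ↔ q = q' ∧ ¬ sameSide i j := by
  simp only [quartetGraph, compl_adj, fromRel_adj, qRel, ne_eq, QVert.u.injEq]
  by_cases hq : q = q'
  · subst hq
    simp only [eq_self_iff_true, true_and, true_implies]
    constructor
    · rintro ⟨h1, h2⟩ hs; exact h2 ⟨h1, Or.inl hs⟩
    · intro hs
      have hij : i ≠ j := fun h => hs (h ▸ sameSide_refl i)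
      exact ⟨hij, fun h => h.2.elim hs (fun h' => hs (sameSide_symm h'))⟩
  · simp [hq]

end cadj


open scoped Fin.NatCast Fin.CommRing

section finhelp

lemma fin_cast_ne' {n a b : ℕ} (h : a % (n+2) ≠ b % (n+2)) :
    (a : Fin (n+2)) ≠ (b : Fin (n+2)) := by
  intro hh
  apply h
  have := congrArg Fin.val hh
  simpa [Fin.val_natCast] using this

lemma cyc_adj_iff {n : ℕ} (i a b : Fin (n+2)) :
    (cycleGraph (n+2)).Adj (i+a) (i+b) ↔ (a - b = 1 ∨ b - a = 1) := by
  have e1 : (i+a)-(i+b) = a - b := by ring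
  have e2 : (i+b)-(i+a) = b - a := by ring
  rw [cycleGraph_adj, e1, e2]

lemma cyc_adj_succ {n : ℕ} (a : ℕ) (i : Fin (n+2)) :
    (cycleGraph (n+2)).Adj (i + (a : Fin (n+2))) (i + ((a+1 : ℕ) : Fin (n+2))) := by
  rw [cyc_adj_iff]
  right
  push_cast
  ring

lemma cyc_nadj {n : ℕ} (a b : ℕ) (h1 : a % (n+2) ≠ (b+1) % (n+2))
    (h2 : b % (n+2) ≠ (a+1) % (n+2)) (i : Fin (n+2)) :
    ¬ (cycleGraph (n+2)).Adj (i + (a : Fin (n+2))) (i + (b : Fin (n+2))) := by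
  rw [cyc_adj_iff]
  rintro (h | h)
  · apply fin_cast_ne' h1
    push_cast
    linear_combination h
  · apply fin_cast_ne' h2
    push_cast
    linear_combination h

lemma cyc_ne {n : ℕ} (a b : ℕ) (h : a % (n+2) ≠ b % (n+2)) (i : Fin (n+2)) :
    i + (a : Fin (n+2)) ≠ i + (b : Fin (n+2)) := fun hh => fin_cast_ne' h (add_left_cancel hh)

lemma one_ne_zero_fin {n : ℕ} : (1 : Fin (n+2)) ≠ 0 := by
  intro h
  have := congrArg Fin.val h
  simp [Fin.val_one] at this

lemma three_ne_zero_fin {n : ℕ} (hn : 3 ≤ n) : (3 : Fin (n+2)) ≠ 0 := by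
  have h3 : (3 : Fin (n+2)) = ((3 : ℕ) : Fin (n+2)) := by push_cast; ring
  rw [h3, show (0 : Fin (n+2)) = ((0 : ℕ) : Fin (n+2)) by push_cast; ring]
  apply fin_cast_ne'
  rw [Nat.mod_eq_of_lt (by omega), Nat.mod_eq_of_lt (by omega)]
  omega

lemma no_triangle {n : ℕ} (hn : 3 ≤ n) {x y z : Fin (n+2)} (hxz : x ≠ z)
    (h1 : (cycleGraph (n+2)).Adj x y) (h2 : (cycleGraph (n+2)).Adj y z)
    (h3 : (cycleGraph (n+2)).Adj x z) : False := by
  rw [cycleGraph_adj] at h1 h2 h3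
  rcases h1 with h1 | h1 <;> rcases h2 with h2 | h2 <;> rcases h3 with h3 | h3
  · exact one_ne_zero_fin (by linear_combination h3 - h1 - h2)
  · exact three_ne_zero_fin hn (by linear_combination - h1 - h2 - h3)
  · exact hxz (by linear_combination h1 - h2)
  · exact hxz (by linear_combination h1 - h2)
  · exact hxz (by linear_combination h2 - h1)
  · exact hxz (by linear_combination h2 - h1)
  · exact three_ne_zero_fin hn (by linear_combination - h1 - h2 - h3)
  · exact one_ne_zero_fin (by linear_combination h3 - h1 - h2)

end finhelp

/-- For every `k ≥ 5`, the complement of `G(P,Q)` contains no induced cycle on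
`k` vertices. -/
theorem stmt10 {P : Type} [Fintype P] (Q : Finset (Quartet P)) (k : ℕ) (hk : 5 ≤ k) :
    ¬ ∃ S : Set (QVert P Q), S.ncard = k ∧
      Nonempty ((quartetGraph P Q)ᶜ.induce S ≃g SimpleGraph.cycleGraph k) := by
  rintro ⟨S, -, ⟨e⟩⟩
  obtain ⟨n, rfl⟩ : ∃ n, k = n + 2 := ⟨k - 2, by omega⟩
  have hn : 3 ≤ n := by omega
  set G := (quartetGraph P Q)ᶜ with hG
  set c : ℕ → Fin (n+2) := fun a => (a : Fin (n+2)) with hc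
  let w : Fin (n+2) → QVert P Q := fun i => ((e.symm i : S) : QVert P Q)
  have hw : ∀ i j, G.Adj (w i) (w j) ↔ (cycleGraph (n+2)).Adj i j := by
    intro i j
    exact e.symm.map_adj_iff
  have hwinj : Function.Injective w :=
    fun i j h => e.symm.toEquiv.injective (Subtype.coe_injective h)
  -- Step A: pt positions are pairwise cycle-adjacent
  have hpt : ∀ i j p p', i ≠ j → w i = QVert.pt p → w j = QVert.pt p' →
      (cycleGraph (n+2)).Adj i j := by
    intro i j p p' hij hi hj
    rw [← hw, hi, hj, cadj_pt_pt]
    intro h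
    exact hij (hwinj (by rw [hi, hj, h]))
  -- modular arithmetic facts
  have hmod : ∀ a b : ℕ, a < n + 2 → b < n + 2 → a ≠ b → a % (n+2) ≠ b % (n+2) := by
    intro a b ha hb hab
    rw [Nat.mod_eq_of_lt ha, Nat.mod_eq_of_lt hb]
    exact hab
  -- Step B: three consecutive non-pt positions
  obtain ⟨i0, h0, h1, h2⟩ : ∃ i0 : Fin (n+2),
      (∀ p, w (i0 + c 0) ≠ QVert.pt p) ∧ (∀ p, w (i0 + c 1) ≠ QVert.pt p) ∧
      (∀ p, w (i0 + c 2) ≠ QVert.pt p) := by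
    by_cases hA : ∃ i p, w i = QVert.pt p
    · obtain ⟨i1, p1, hp1⟩ := hA
      by_cases hB : ∃ j p, j ≠ i1 ∧ w j = QVert.pt p
      · obtain ⟨i2, p2, hne2, hp2⟩ := hB
        have hadj12 := hpt i2 i1 _ _ hne2 hp2 hp1
        have hadj12' := hadj12
        rw [cycleGraph_adj] at hadj12'
        obtain ⟨a, ha⟩ : ∃ a : Fin (n+2),
            (a = i1 ∧ a + c 1 = i2) ∨ (a = i2 ∧ a + c 1 = i1) := by
          rcases hadj12' with h | h
          · exact ⟨i1, Or.inl ⟨rfl, by simp only [hc]; push_cast; linear_combination -h⟩⟩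
          · exact ⟨i2, Or.inr ⟨rfl, by simp only [hc]; push_cast; linear_combination -h⟩⟩
        have honly : ∀ j p, w j = QVert.pt p → j = a + c 0 ∨ j = a + c 1 := by
          intro j p hj
          have hz : a + c 0 = a := by simp [hc]
          by_contra hcon
          push_neg at hcon
          obtain ⟨hj1, hj2⟩ := hcon
          rw [hz] at hj1
          rcases ha with ⟨rfl, hi2⟩ | ⟨rfl, hi1⟩
          · exact no_triangle hn hj1 ((hpt j i2 _ _ (hi2 ▸ hj2) hj hp2)) hadj12
              (hpt j a _ _ hj1 hj hp1)
          · exact no_triangle hn hj1 (hpt j i1 _ _ (hi1 ▸ hj2) hj hp1) hadj12.symm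
              (hpt j a _ _ hj1 hj hp2)
        refine ⟨a + c 2, ?_, ?_, ?_⟩
        · intro p hp
          have h23 : (a + c 2) + c 0 = a + c 2 := by simp [hc]
          rw [h23] at hp
          rcases honly _ _ hp with h | h
          · exact cyc_ne 2 0 (hmod 2 0 (by omega) (by omega) (by omega)) a h
          · exact cyc_ne 2 1 (hmod 2 1 (by omega) (by omega) (by omega)) a h
        · intro p hp
          have h23 : (a + c 2) + c 1 = a + c 3 := by simp only [hc]; push_cast; ring
          rw [h23] at hp
          rcases honly _ _ hp with h | h
          · exact cyc_ne 3 0 (hmod 3 0 (by omega) (by omega) (by omega)) a h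
          · exact cyc_ne 3 1 (hmod 3 1 (by omega) (by omega) (by omega)) a h
        · intro p hp
          have h23 : (a + c 2) + c 2 = a + c 4 := by simp only [hc]; push_cast; ring
          rw [h23] at hp
          rcases honly _ _ hp with h | h
          · exact cyc_ne 4 0 (hmod 4 0 (by omega) (by omega) (by omega)) a h
          · exact cyc_ne 4 1 (hmod 4 1 (by omega) (by omega) (by omega)) a h
      · push_neg at hB
        refine ⟨i1 + c 1, ?_, ?_, ?_⟩
        · intro p hp
          have h23 : (i1 + c 1) + c 0 = i1 + c 1 := by simp [hc]
          rw [h23] at hp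
          have hz : i1 + c 0 = i1 := by simp [hc]
          have hne := cyc_ne 1 0 (hmod 1 0 (by omega) (by omega) (by omega)) i1
          rw [hz] at hne
          exact hB _ p hne hp
        · intro p hp
          have h23 : (i1 + c 1) + c 1 = i1 + c 2 := by simp only [hc]; push_cast; ring
          rw [h23] at hp
          have hz : i1 + c 0 = i1 := by simp [hc]
          have hne := cyc_ne 2 0 (hmod 2 0 (by omega) (by omega) (by omega)) i1
          rw [hz] at hne
          exact hB _ p hne hp
        · intro p hp
          have h23 : (i1 + c 1) + c 2 = i1 + c 3 := by simp only [hc]; push_cast; ring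
          rw [h23] at hp
          have hz : i1 + c 0 = i1 := by simp [hc]
          have hne := cyc_ne 3 0 (hmod 3 0 (by omega) (by omega) (by omega)) i1
          rw [hz] at hne
          exact hB _ p hne hp
    · push_neg at hA
      exact ⟨0, fun p => hA _ p, fun p => hA _ p, fun p => hA _ p⟩
  -- extract u-forms
  have getU : ∀ j : Fin (n+2), (∀ p, w j ≠ QVert.pt p) →
      ∃ q i, w j = QVert.u q i := by
    intro j hj
    cases hwj : w j with
    | pt p => exact absurd hwj (hj p)
    | u q i => exact ⟨q, i, rfl⟩
  obtain ⟨qa, ia, hA0⟩ := getU _ h0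
  obtain ⟨qb, ib, hA1⟩ := getU _ h1
  obtain ⟨qc, ic, hA2⟩ := getU _ h2
  -- adjacency along the run
  have A01 : G.Adj (w (i0 + c 0)) (w (i0 + c 1)) := (hw _ _).2 (cyc_adj_succ 0 i0)
  have A12 : G.Adj (w (i0 + c 1)) (w (i0 + c 2)) := (hw _ _).2 (cyc_adj_succ 1 i0)
  have A23 : G.Adj (w (i0 + c 2)) (w (i0 + c 3)) := (hw _ _).2 (cyc_adj_succ 2 i0)
  have N03 : ¬ G.Adj (w (i0 + c 0)) (w (i0 + c 3)) :=
    fun h => cyc_nadj 0 3 (hmod 0 4 (by omega) (by omega) (by omega))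
      (hmod 3 1 (by omega) (by omega) (by omega)) i0 ((hw _ _).1 h)
  have N13 : ¬ G.Adj (w (i0 + c 1)) (w (i0 + c 3)) :=
    fun h => cyc_nadj 1 3 (hmod 1 4 (by omega) (by omega) (by omega))
      (hmod 3 2 (by omega) (by omega) (by omega)) i0 ((hw _ _).1 h)
  rw [hA0, hA1, cadj_uu] at A01
  rw [hA1, hA2, cadj_uu] at A12
  obtain ⟨hqab, hsab⟩ := A01
  obtain ⟨hqbc, hsbc⟩ := A12
  -- case on the fourth vertex
  cases hx : w (i0 + c 3) with
  | pt p =>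
    rw [hA0, hx] at N03
    rw [hA1, hx] at N13
    rw [G.adj_comm, cadj_pt_u, not_not] at N03 N13
    have hiab : ia = ib := by
      apply elem_inj qa.1
      show (qa.1).elem ia = (qa.1).elem ib
      rw [← N03, hqab]
      exact N13
    exact hsab (hiab ▸ sameSide_refl ia)
  | u qd id =>
    rw [hA2, hx, cadj_uu] at A23
    rw [hA0, hx, cadj_uu] at N03
    rw [hA1, hx, cadj_uu] at N13
    obtain ⟨hqcd, -⟩ := A23
    have hqad : qa = qd := hqab.trans (hqbc.trans hqcd)
    have hsad : sameSide ia id := by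
      by_contra hcon
      exact N03 ⟨hqad, hcon⟩
    have hsbd : sameSide ib id := by
      by_contra hcon
      exact N13 ⟨hqab.symm.trans hqad, hcon⟩
    exact hsab (sameSide_trans hsad (sameSide_symm hsbd))
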